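/- In the game of Section 3, the exact set of pure Nash equilibria is {(P, SS), (P, SP), (S, PP)}, where the first coordinate is Agent 2's move and the second is Agent 1's contingent strategy. -/
import Mathlib


inductive B2 | P | S
deriving DecidableEq

inductive B1 | SS | SP | PS | PP
deriving DecidableEq

open B2 B1

def u2 : B2 → B1 → ℤ
  | P, SS => 8 | P, SP => 8 | P, PS => 0 | P, PP => 0
  | S, SS => 6 | S, SP => 2 | S, PS => 6 | S, PP => 2

def u1 : B2 → B1 → ℤ
  | P, SS => 8 | P, SP => 8 | P, PS => 0 | P, PP => 0
  | S, SS => 10 | S, SP => 18 | S, PS => 10 | S, PP => 18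

def NashEq (a : B2) (b : B1) : Prop :=
  (∀ a' : B2, u2 a' b ≤ u2 a b) ∧ (∀ b' : B1, u1 a b' ≤ u1 a b)

instance : Fintype B2 := ⟨{B2.P, B2.S}, by intro x; cases x <;> decide⟩
instance : Fintype B1 := ⟨{B1.SS, B1.SP, B1.PS, B1.PP}, by intro x; cases x <;> decide⟩

theorem stmt8 : ∀ a : B2, ∀ b : B1,
    NashEq a b ↔ ((a, b) = (P, SS) ∨ (a, b) = (P, SP) ∨ (a, b) = (S, PP)) := by
  intro a b
  cases a <;> cases b <;> simp only [NashEq] <;> decide
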